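/- Let P, K be positive integers, ε > 0, a ∈ ℝ^K, S a P×P Hermitian positive semidefinite complex matrix, and define L(ω) = tr(S Ĉ(ω)^{-1}) + log det Ĉ(ω) where Ĉ(ω) = Σ_{k=1}^K s(a_k) v(ω_k) v(ω_k)^H + ε I. Then for each k, the partial derivative of L with respect to ω_k at ω equals 2 s(a_k) · Im(v(ω_k)^H D E v(ω_k)), where E = Ĉ(ω)^{-1}(Ĉ(ω) − S)Ĉ(ω)^{-1} and D = diag(0, 1, …, P−1). -/

import Mathlib

/-!
Write `Ĉ(t)` for `Ĉ` with `ω_k` replaced by `t`. Only the `k`-th summand moves, and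
differentiating `v(t) v(t)ᴴ` entrywise gives `Ĉ' = i s(a_k) (D W - W D)` with `W = v vᴴ`.
For any differentiable path of positive definite matrices, Jacobi's formula and
`(C⁻¹)' = -C⁻¹ C' C⁻¹` give `(tr(S C⁻¹) + log det C)' = Re tr(E C')` with
`E = C⁻¹ (C - S) C⁻¹`. Since `D` and `E` are Hermitian, `tr(E D W)` is the conjugate of
`z = vᴴ D E v = tr(E W D)`, so `Re tr(E Ĉ') = s(a_k) Re(i (z̄ - z)) = 2 s(a_k) Im z`.
-/

open Matrix
open scoped ComplexOrder

/-- The rank-one Hermitian matrix `v vᴴ` formed from a vector `v ∈ ℂ^P`. -/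
noncomputable def outer {P : ℕ} (v : Fin P → ℂ) : Matrix (Fin P) (Fin P) ℂ :=
  Matrix.of fun p q => v p * star (v q)

/-- The steering vector `v(ω) ∈ ℂ^P`, `v(ω)_p = e^{iωp}` for `p = 0, …, P−1`. -/
noncomputable def steer (P : ℕ) (ω : ℝ) : Fin P → ℂ :=
  fun p => Complex.exp (Complex.I * (ω : ℂ) * ((p : ℕ) : ℂ))

/-- The softplus function `s(a) = log(1 + e^a)`. -/
noncomputable def softplus (x : ℝ) : ℝ := Real.log (1 + Real.exp x)

/-- The diagonal matrix `D = diag(0, 1, …, P−1)`. -/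
noncomputable def Dmat (P : ℕ) : Matrix (Fin P) (Fin P) ℂ :=
  Matrix.diagonal fun p => ((p : ℕ) : ℂ)

/-- The parameterized covariance `Ĉ(ω) = Σ_k s(a_k) v(ω_k) v(ω_k)ᴴ + ε I`. -/
noncomputable def Chat (P K : ℕ) (ε : ℝ) (a ω : Fin K → ℝ) :
    Matrix (Fin P) (Fin P) ℂ :=
  ∑ k, (softplus (a k) : ℂ) • outer (steer P (ω k)) + (ε : ℂ) • 1

/-- The negative log-likelihood `L(ω) = tr(S Ĉ(ω)⁻¹) + log det Ĉ(ω)` as a function of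
the frequencies, with the amplitudes fixed. -/
noncomputable def nllω (P K : ℕ) (ε : ℝ) (a : Fin K → ℝ) (S : Matrix (Fin P) (Fin P) ℂ)
    (ω : Fin K → ℝ) : ℝ :=
  (Matrix.trace (S * (Chat P K ε a ω)⁻¹)).re + Real.log ((Chat P K ε a ω).det).re

namespace Matrix

variable {𝕜 : Type*} [RCLike 𝕜] {n : Type*} [Fintype n]

theorem hasDerivAt_trace_mul {A : ℝ → Matrix n n 𝕜} {A' : Matrix n n 𝕜} {t : ℝ}
    (hA : ∀ i j, HasDerivAt (fun s => A s i j) (A' i j) t) (B : Matrix n n 𝕜) :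
    HasDerivAt (fun s => trace (B * A s)) (trace (B * A')) t := by
  simp only [trace, diag, mul_apply]
  exact .fun_sum fun i _ => .fun_sum fun j _ => (hA j i).const_mul _

variable [DecidableEq n]

theorem det_updateRow_eq_sum_mul_adjugate (A : Matrix n n 𝕜) (i : n) (b : n → 𝕜) :
    (A.updateRow i b).det = ∑ j, b j * A.adjugate j i := by
  rw [← cramer_transpose_apply, cramer_eq_adjugate_mulVec, ← adjugate_transpose]
  simp only [mulVec, dotProduct, transpose_apply]
  exact Finset.sum_congr rfl fun j _ => mul_comm _ _

theorem sum_det_updateRow_eq_trace_adjugate_mul (A B : Matrix n n 𝕜) :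
    ∑ i, (A.updateRow i (B i)).det = trace (A.adjugate * B) := by
  simp only [det_updateRow_eq_sum_mul_adjugate, trace, diag, mul_apply]
  rw [Finset.sum_comm]
  exact Finset.sum_congr rfl fun i _ => Finset.sum_congr rfl fun j _ => mul_comm _ _

variable (𝕜 n) in
noncomputable def detRowContinuousMultilinear :
    ContinuousMultilinearMap 𝕜 (fun _ : n => n → 𝕜) 𝕜 where
  toMultilinearMap := (detRowAlternating : (n → 𝕜) [⋀^n]→ₗ[𝕜] 𝕜).toMultilinearMap
  cont := continuous_id.matrix_det

theorem hasDerivAt_det {A : ℝ → Matrix n n 𝕜} {A' : Matrix n n 𝕜} {t : ℝ}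
    (hA : ∀ i j, HasDerivAt (fun s => A s i j) (A' i j) t) :
    HasDerivAt (fun s => (A s).det) (trace ((A t).adjugate * A')) t := by
  have hrows : HasDerivAt (fun s i => A s i) (fun i => A' i) t :=
    hasDerivAt_pi.2 fun i => hasDerivAt_pi.2 fun j => hA i j
  have := (((detRowContinuousMultilinear 𝕜 n).hasFDerivAt fun i => A t i).restrictScalars
    ℝ).comp_hasDerivAt t hrows
  rw [ContinuousLinearMap.coe_restrictScalars', ContinuousMultilinearMap.linearDeriv_apply] at this
  rw [← sum_det_updateRow_eq_trace_adjugate_mul]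
  exact this

section Inverse

/- `Ring.inverse` is differentiated in a complete normed algebra, which the `ℓ∞` operator norm
makes of matrices; the entrywise conclusion of `hasDerivAt_inv_apply` does not depend on
this choice. -/
attribute [local instance] Matrix.linftyOpNormedAddCommGroup Matrix.linftyOpNormedRing
  Matrix.linftyOpNormedSpace Matrix.linftyOpNormedAlgebra

theorem hasDerivAt_of_hasDerivAt_apply {A : ℝ → Matrix n n 𝕜} {A' : Matrix n n 𝕜} {t : ℝ}
    (hA : ∀ i j, HasDerivAt (fun s => A s i j) (A' i j) t) : HasDerivAt A A' t := by
  have hsum : ∀ M : Matrix n n 𝕜, M = ∑ i, ∑ j, M i j • single i j (1 : 𝕜) := fun M => by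
    simp only [smul_single, smul_eq_mul, mul_one]
    exact matrix_eq_sum_single M
  rw [funext fun s => hsum (A s), hsum A']
  exact .fun_sum fun i _ => .fun_sum fun j _ => (hA i j).smul_const _

theorem hasDerivAt_inv_apply {A : ℝ → Matrix n n 𝕜} {A' : Matrix n n 𝕜} {t : ℝ}
    (hA : ∀ i j, HasDerivAt (fun s => A s i j) (A' i j) t) (ht : IsUnit (A t)) (i j : n) :
    HasDerivAt (fun s => (A s)⁻¹ i j) (-((A t)⁻¹ * A' * (A t)⁻¹) i j) t := by
  obtain ⟨u, hu⟩ := ht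
  let entry : Matrix n n 𝕜 →ₗ[ℝ] 𝕜 :=
    { toFun := fun M => M i j, map_add' := fun _ _ => rfl, map_smul' := fun _ _ => rfl }
  have := entry.toContinuousLinearMap.hasFDerivAt.comp_hasDerivAt t <|
    (hu ▸ hasFDerivAt_ringInverse (𝕜 := ℝ) u).comp_hasDerivAt t (hasDerivAt_of_hasDerivAt_apply hA)
  simp only [Function.comp_def, ← nonsing_inv_eq_ringInverse] at this
  rw [← hu, ← coe_units_inv]
  exact this

end Inverse

theorem hasDerivAt_log_re_det {A : ℝ → Matrix n n 𝕜} {A' : Matrix n n 𝕜} {t : ℝ}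
    (hA : ∀ i j, HasDerivAt (fun s => A s i j) (A' i j) t) (ht : (A t).PosDef) :
    HasDerivAt (fun s => Real.log (RCLike.re (A s).det))
      (RCLike.re (trace ((A t)⁻¹ * A'))) t := by
  obtain ⟨r, hr, hdet⟩ := RCLike.pos_iff_exists_ofReal.mp ht.det_pos
  have hre : RCLike.re (A t).det = r := by rw [← hdet, RCLike.ofReal_re]
  have hre_det : HasDerivAt (fun s => RCLike.re (A s).det)
      (RCLike.re (trace ((A t).adjugate * A'))) t :=
    (RCLike.reCLM (K := 𝕜)).hasFDerivAt.comp_hasDerivAt t (hasDerivAt_det hA)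
  refine (hre_det.log (hre ▸ hr.ne')).congr_deriv ?_
  rw [hre, inv_def, smul_mul, trace_smul, ← hdet, Ring.inverse_eq_inv', smul_eq_mul,
    ← RCLike.ofReal_inv, RCLike.re_ofReal_mul, div_eq_inv_mul]

theorem hasDerivAt_re_trace_mul_inv_add_log_re_det {A : ℝ → Matrix n n 𝕜}
    {A' : Matrix n n 𝕜} {t : ℝ} (hA : ∀ i j, HasDerivAt (fun s => A s i j) (A' i j) t)
    (ht : (A t).PosDef) (S : Matrix n n 𝕜) :
    HasDerivAt (fun s => RCLike.re (trace (S * (A s)⁻¹)) + Real.log (RCLike.re (A s).det))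
      (RCLike.re (trace ((A t)⁻¹ * (A t - S) * (A t)⁻¹ * A'))) t := by
  have htrace := (RCLike.reCLM (K := 𝕜)).hasFDerivAt.comp_hasDerivAt t
    (hasDerivAt_trace_mul (A' := -((A t)⁻¹ * A' * (A t)⁻¹)) (hasDerivAt_inv_apply hA ht.isUnit) S)
  refine (htrace.add (hasDerivAt_log_re_det hA ht)).congr_deriv ?_
  have hcancel : (A t)⁻¹ * A t = 1 := nonsing_inv_mul _ ((A t).isUnit_iff_isUnit_det.mp ht.isUnit)
  rw [RCLike.reCLM_apply, ← map_add, mul_sub, hcancel, sub_mul, one_mul, sub_mul, trace_sub,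
    mul_neg, trace_neg, trace_mul_cycle', Matrix.mul_assoc, Matrix.mul_assoc, neg_add_eq_sub]

end Matrix

theorem star_dotProduct_conjTranspose_mulVec {R n : Type*} [CommSemiring R] [StarRing R]
    [Fintype n] (M : Matrix n n R) (v : n → R) :
    star v ⬝ᵥ (Mᴴ *ᵥ v) = star (star v ⬝ᵥ (M *ᵥ v)) := by
  rw [star_dotProduct, star_mulVec, conjTranspose_conjTranspose, dotProduct_mulVec]

theorem trace_mul_outer {P : ℕ} (M : Matrix (Fin P) (Fin P) ℂ) (v : Fin P → ℂ) :
    trace (M * outer v) = star v ⬝ᵥ (M *ᵥ v) := by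
  rw [show outer v = vecMulVec v (star v) from rfl, mul_vecMulVec, trace_vecMulVec,
    dotProduct_comm]

theorem re_trace_mul_I_smul_commutator_outer {P : ℕ} {D E : Matrix (Fin P) (Fin P) ℂ}
    (hD : D.IsHermitian) (hE : E.IsHermitian) (v : Fin P → ℂ) :
    (trace (E * (Complex.I • (D * outer v - outer v * D)))).re =
      2 * (star v ⬝ᵥ ((D * E) *ᵥ v)).im := by
  have hconj : trace (E * (D * outer v)) = star (star v ⬝ᵥ ((D * E) *ᵥ v)) := by
    rw [← Matrix.mul_assoc, trace_mul_outer, ← star_dotProduct_conjTranspose_mulVec,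
      conjTranspose_mul, hD.eq, hE.eq]
  have hplain : trace (E * (outer v * D)) = star v ⬝ᵥ ((D * E) *ᵥ v) := by
    rw [trace_mul_cycle', ← Matrix.mul_assoc, trace_mul_outer]
  rw [mul_smul_comm, trace_smul, mul_sub, trace_sub, hconj, hplain, smul_eq_mul]
  simp only [RCLike.star_def, Complex.mul_re, Complex.I_re, Complex.sub_re, Complex.conj_re,
    Complex.I_im, Complex.sub_im, Complex.conj_im]
  ring

theorem hasDerivAt_steer (P : ℕ) (t : ℝ) (p : Fin P) :
    HasDerivAt (fun s => steer P s p) (Complex.I * p * steer P t p) t := by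
  have := (((hasDerivAt_id t).ofReal_comp.const_mul Complex.I).mul_const (p : ℂ)).cexp
  simpa [steer, mul_comm, mul_left_comm, mul_assoc] using this

theorem hasDerivAt_outer_steer (P : ℕ) (t : ℝ) (p q : Fin P) :
    HasDerivAt (fun s => outer (steer P s) p q)
      ((Complex.I • (Dmat P * outer (steer P t) - outer (steer P t) * Dmat P)) p q) t := by
  refine ((hasDerivAt_steer P t p).mul (hasDerivAt_steer P t q).star).congr_deriv ?_
  simp only [RCLike.star_def, star_mul', Complex.conj_I, star_natCast, Dmat, outer,
    Matrix.smul_apply, Matrix.sub_apply, diagonal_mul, of_apply, mul_diagonal, smul_eq_mul]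
  ring

theorem chat_update (P K : ℕ) (ε : ℝ) (a ω : Fin K → ℝ) (k : Fin K) (t : ℝ) :
    Chat P K ε a (Function.update ω k t) =
      Chat P K ε a ω + (softplus (a k) : ℂ) • (outer (steer P t) - outer (steer P (ω k))) := by
  simp only [Chat]
  rw [← Finset.add_sum_erase _ _ (Finset.mem_univ k),
    ← Finset.add_sum_erase _ _ (Finset.mem_univ k), Function.update_self,
    Finset.sum_congr rfl fun j hj => by rw [Function.update_of_ne (Finset.ne_of_mem_erase hj)]]
  module

theorem hasDerivAt_chat_update_apply (P K : ℕ) (ε : ℝ) (a ω : Fin K → ℝ) (k : Fin K)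
    (p q : Fin P) :
    HasDerivAt (fun t => Chat P K ε a (Function.update ω k t) p q)
      (((softplus (a k) : ℂ) • Complex.I •
        (Dmat P * outer (steer P (ω k)) - outer (steer P (ω k)) * Dmat P)) p q) (ω k) := by
  simp only [chat_update, Matrix.add_apply, Matrix.smul_apply, Matrix.sub_apply, smul_eq_mul]
  exact (((hasDerivAt_outer_steer P (ω k) p q).sub_const _).const_mul _).const_add _

theorem chat_posDef (P K : ℕ) {ε : ℝ} (hε : 0 < ε) (a ω : Fin K → ℝ) :
    (Chat P K ε a ω).PosDef := by
  have hsoftplus (x : ℝ) : (0 : ℂ) ≤ softplus x := by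
    exact_mod_cast Real.log_nonneg (by linarith [Real.exp_pos x])
  refine PosDef.posSemidef_add (posSemidef_sum _ fun j _ => ?_) (PosDef.one.smul ?_)
  · exact (posSemidef_vecMulVec_self_star _).smul (hsoftplus _)
  · exact_mod_cast hε

theorem stmt_10_general (P K : ℕ) (ε : ℝ) (hε : 0 < ε)
    (a : Fin K → ℝ) (S : Matrix (Fin P) (Fin P) ℂ) (hS : S.PosSemidef)
    (ω : Fin K → ℝ) (k : Fin K) :
    HasDerivAt (fun t => nllω P K ε a S (Function.update ω k t))
      (2 * softplus (a k) *
        (star (steer P (ω k)) ⬝ᵥ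
          ((Dmat P * ((Chat P K ε a ω)⁻¹ * (Chat P K ε a ω - S) * (Chat P K ε a ω)⁻¹)) *ᵥ
            steer P (ω k))).im)
      (ω k) := by
  have hC : (Chat P K ε a ω).PosDef := chat_posDef P K hε a ω
  have hL := hasDerivAt_re_trace_mul_inv_add_log_re_det (hasDerivAt_chat_update_apply P K ε a ω k)
    (by rwa [Function.update_eq_self]) S
  simp only [Function.update_eq_self, RCLike.re_to_complex] at hL
  refine hL.congr_deriv ?_
  set C := Chat P K ε a ω
  have hE : (C⁻¹ * (C - S) * C⁻¹).IsHermitian := by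
    have := isHermitian_mul_mul_conjTranspose C⁻¹ (hC.isHermitian.sub hS.isHermitian)
    rwa [hC.isHermitian.inv.eq] at this
  have hD : (Dmat P).IsHermitian :=
    isHermitian_diagonal_of_self_adjoint _ (by ext p; simp only [Pi.star_apply, star_natCast])
  rw [mul_smul_comm, trace_smul, smul_eq_mul, Complex.re_ofReal_mul,
    re_trace_mul_I_smul_commutator_outer hD hE]
  ring

/-- The partial derivative of `L` with respect to `ω_k` equals
`2 s(a_k) · Im(v(ω_k)ᴴ D E v(ω_k))` with `E = Ĉ⁻¹ (Ĉ − S) Ĉ⁻¹` and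
`D = diag(0, 1, …, P−1)`. -/
theorem stmt_10 (P K : ℕ) (hP : 0 < P) (hK : 0 < K) (ε : ℝ) (hε : 0 < ε)
    (a : Fin K → ℝ) (S : Matrix (Fin P) (Fin P) ℂ) (hS : S.PosSemidef)
    (ω : Fin K → ℝ) (k : Fin K) :
    HasDerivAt (fun t => nllω P K ε a S (Function.update ω k t))
      (2 * softplus (a k) *
        (star (steer P (ω k)) ⬝ᵥ
          ((Dmat P * ((Chat P K ε a ω)⁻¹ * (Chat P K ε a ω - S) * (Chat P K ε a ω)⁻¹)) *ᵥ
            steer P (ω k))).im)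
      (ω k) :=
  stmt_10_general P K ε hε a S hS ω k
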